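/- In the graph G' obtained from a finite simple graph G (with n vertices, n ≥ 2) by deleting a vertex x and attaching to each former neighbor x' of x a fresh clique of n−1 new vertices (joined completely to x' and to each other), every clique of size n in G' consists of exactly one old vertex together with its attached n−1 fresh vertices. -/

import Mathlib

/-- The graph obtained from `G` by deleting the vertex `x` and attaching to each former
neighbor `x'` of `x` a fresh clique of `n - 1` new vertices, pairwise adjacent and each
adjacent to `x'` (and to nothing else). -/
def attachAll {V : Type*} (G : SimpleGraph V) (x : V) (n : ℕ) :
    SimpleGraph ({z : V // z ≠ x} ⊕ (G.neighborSet x × Fin (n - 1))) where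
  Adj a b :=
    match a, b with
    | .inl a, .inl b => G.Adj ↑a ↑b
    | .inl a, .inr (w, _) => (↑a : V) = ↑w
    | .inr (w, _), .inl b => (↑b : V) = ↑w
    | .inr (w, i), .inr (w', j) => w = w' ∧ i ≠ j
  symm := by
    constructor
    rintro (a | ⟨w, i⟩) (b | ⟨w', j⟩) h
    · exact G.adj_symm h
    · exact h
    · exact h
    · exact ⟨h.1.symm, h.2.symm⟩
  loopless := by
    constructor
    rintro (a | ⟨w, i⟩) h
    · exact G.irrefl h
    · exact h.2 rfl

/-!
Old vertices are only `|V| - 1 < n` many, so an `n`-clique contains a fresh vertex `(w, i)`.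
The closed neighbourhood of `(w, i)` is the block formed by `w` and its `n - 1` attached
vertices, which has exactly `n` elements; a clique through `(w, i)` lies in that block, and
having `n` elements it is the whole block.
-/

theorem Set.exists_inr_mem_of_card_lt_ncard {α β : Type*} [Finite α] {s : Set (α ⊕ β)}
    (h : Nat.card α < s.ncard) : ∃ b, Sum.inr b ∈ s := by
  by_contra! hs
  have hsub : s ⊆ Set.range Sum.inl := by
    rintro (a | b) hab
    · exact ⟨a, rfl⟩
    · exact absurd hab (hs b)
  rw [← Set.ncard_preimage_of_injective_subset_range Sum.inl_injective hsub] at h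
  exact (Set.ncard_le_card _).not_gt h

namespace attachAll

variable {V : Type*} {G : SimpleGraph V} {x : V} {n : ℕ}

def block (n : ℕ) (w : G.neighborSet x) :
    Set ({z : V // z ≠ x} ⊕ (G.neighborSet x × Fin (n - 1))) :=
  insert (.inl ⟨w, (show G.Adj x w from w.2).ne'⟩) (Set.range fun i => .inr (w, i))

theorem ncard_block (hn : 1 ≤ n) (w : G.neighborSet x) : (block n w).ncard = n := by
  rw [block, Set.ncard_insert_of_notMem (by simp) (Set.toFinite _),
    Set.ncard_range_of_injective (fun i j hij => by simpa using hij), Nat.card_fin]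
  omega

theorem _root_.SimpleGraph.IsClique.subset_block
    {s : Set ({z : V // z ≠ x} ⊕ (G.neighborSet x × Fin (n - 1)))}
    (hs : (attachAll G x n).IsClique s) {w : G.neighborSet x} {i : Fin (n - 1)}
    (hwi : .inr (w, i) ∈ s) : s ⊆ block n w := by
  rintro (a | ⟨w', j⟩) ha
  · have hadj : (a : V) = w := hs ha hwi (by simp)
    exact Or.inl (congrArg Sum.inl (Subtype.ext hadj))
  · obtain rfl | hne := eq_or_ne w' w
    · exact Or.inr ⟨j, rfl⟩
    · exact absurd (hs ha hwi (by simp [hne])).1 hne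

end attachAll

theorem attachAll_nclique_structure_general {V : Type*} [Fintype V] (n : ℕ)
    (G : SimpleGraph V) (hcard : Fintype.card V = n) (x : V)
    (s : Set ({z : V // z ≠ x} ⊕ (G.neighborSet x × Fin (n - 1))))
    (hclique : (attachAll G x n).IsClique s) (hsize : s.ncard = n) :
    ∃ (w : V) (hadj : G.Adj x w),
      s = insert (Sum.inl ⟨w, hadj.ne'⟩)
        (Set.range fun i : Fin (n - 1) => Sum.inr (⟨w, hadj⟩, i)) := by
  have hn : 1 ≤ n := hcard ▸ Fintype.card_pos_iff.mpr ⟨x⟩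
  have hold : Nat.card {z : V // z ≠ x} = n - 1 := by
    classical
    simp [Fintype.card_subtype_compl, hcard]
  obtain ⟨⟨w, i⟩, hwi⟩ := Set.exists_inr_mem_of_card_lt_ncard (s := s) (by omega)
  exact ⟨w, w.2, Set.eq_of_subset_of_ncard_le (hclique.subset_block hwi)
    ((attachAll.ncard_block hn w).trans hsize.symm).le⟩

theorem attachAll_nclique_structure {V : Type*} [Fintype V] (n : ℕ) (hn : 2 ≤ n)
    (G : SimpleGraph V) (hcard : Fintype.card V = n) (x : V)
    (s : Set ({z : V // z ≠ x} ⊕ (G.neighborSet x × Fin (n - 1))))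
    (hclique : (attachAll G x n).IsClique s) (hsize : s.ncard = n) :
    ∃ (w : V) (hadj : G.Adj x w),
      s = insert (Sum.inl ⟨w, hadj.ne'⟩)
        (Set.range fun i : Fin (n - 1) => Sum.inr (⟨w, hadj⟩, i)) :=
  attachAll_nclique_structure_general n G hcard x s hclique hsize
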